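/- Let M be a 3-connected matroid. If (X, {e}, Y) is a vertical 3-separation of M, then (X − cl(Y), {e}, cl(Y) − {e}) is also a vertical 3-separation of M. Dually, if (X, {e}, Y) is a cyclic 3-separation of M, then (X − cl*(Y), {e}, cl*(Y) − {e}) is also a cyclic 3-separation of M. -/

import Mathlib

/-!
Write `C = cl(Y)` and `X' = X - C`, so that `(X', C)` partitions `E(M)` and `r(C) = r(Y)`.
Then `r(X') + r(Y) ≤ r(X) + r(Y) ≤ r(M) + 2`, while 3-connectivity applied to `(X', C)` gives
`r(X') + r(Y) ≥ r(M) + 2` (if `|X'| ≤ 1` it would make `Y` spanning, contradicting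
`r(X) ≥ 3`). Hence `r(X') = r(X)`, so `cl(X') = cl(X)` contains `e`, and every other condition
is inherited from `(X, {e}, Y)`. The cyclic case is the vertical case in `M✶`, which is again
3-connected because the connectivity function is self-dual.
-/

open Set Matroid

namespace ElasticPaper

variable {α : Type*}

/-! ### Basic operations: deletion, contraction, minors, isomorphism -/

/-- The deletion `M \ D`. -/
def del (M : Matroid α) (D : Set α) : Matroid α := M ↾ (M.E \ D)

/-- The contraction `M / C`. -/
def con (M : Matroid α) (C : Set α) : Matroid α := (del M✶ C)✶

/-- `N` is a minor of `M`. -/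
def IsMinorOf (N M : Matroid α) : Prop := ∃ C D : Set α, N = del (con M C) D

/-- Isomorphism of matroids (on a common label type). -/
def Iso (M N : Matroid α) : Prop :=
  ∃ f : α → α, Set.BijOn f M.E N.E ∧ ∀ I ⊆ M.E, (M.Indep I ↔ N.Indep (f '' I))

/-- `M` has a minor isomorphic to `N`. -/
def HasMinorIso (M N : Matroid α) : Prop := ∃ N', IsMinorOf N' M ∧ Iso N N'

/-! ### Rank and connectivity -/

/-- The rank of a set, valued in `ℕ∞`. -/
noncomputable def eRk (M : Matroid α) (X : Set α) : ℕ∞ :=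
  ⨆ I ∈ {I : Set α | M.Indep I ∧ I ⊆ X}, I.encard

/-- The rank of a matroid. -/
noncomputable def eRank (M : Matroid α) : ℕ∞ := eRk M M.E

/-- `X` is `k`-separating in `M`, i.e. `λ(X) ≤ k - 1`. -/
def KSeparating (M : Matroid α) (k : ℕ) (X : Set α) : Prop :=
  eRk M X + eRk M (M.E \ X) + 1 ≤ eRank M + (k : ℕ∞)

/-- `X` is exactly `k`-separating in `M`, i.e. `λ(X) = k - 1`. -/
def ExactlyKSeparating (M : Matroid α) (k : ℕ) (X : Set α) : Prop :=
  eRk M X + eRk M (M.E \ X) + 1 = eRank M + (k : ℕ∞)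

/-- `(X, Y)` is a `k`-separation of `M`. -/
def KSeparation (M : Matroid α) (k : ℕ) (X Y : Set α) : Prop :=
  Disjoint X Y ∧ X ∪ Y = M.E ∧ KSeparating M k X ∧
    (k : ℕ∞) ≤ X.encard ∧ (k : ℕ∞) ≤ Y.encard

/-- `M` is `n`-connected: it has no `k`-separations for `k < n`. -/
def NConnected (M : Matroid α) (n : ℕ) : Prop :=
  ∀ k X Y, k < n → ¬ KSeparation M k X Y

/-- `M` is `3`-connected. -/
abbrev ThreeConnected (M : Matroid α) : Prop := NConnected M 3

/-- `(X, Y)` is a vertical `k`-separation of `M`. -/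
def VerticalKSeparation (M : Matroid α) (k : ℕ) (X Y : Set α) : Prop :=
  KSeparation M k X Y ∧ (k : ℕ∞) ≤ eRk M X ∧ (k : ℕ∞) ≤ eRk M Y

/-- `(X, {e}, Y)` is a vertical `3`-separation of `M`. -/
def Vertical3Sep (M : Matroid α) (X : Set α) (e : α) (Y : Set α) : Prop :=
  e ∉ X ∧ e ∉ Y ∧ Disjoint X Y ∧ X ∪ {e} ∪ Y = M.E ∧
  VerticalKSeparation M 3 (X ∪ {e}) Y ∧ VerticalKSeparation M 3 X (Y ∪ {e}) ∧
  e ∈ M.closure X ∧ e ∈ M.closure Y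

/-- `(X, {e}, Y)` is a cyclic `3`-separation of `M`. -/
def Cyclic3Sep (M : Matroid α) (X : Set α) (e : α) (Y : Set α) : Prop :=
  Vertical3Sep M✶ X e Y

/-- `Y ∪ {e}` is maximal among vertical 3-separations of `M`. -/
def VertMaximal (M : Matroid α) (e : α) (Y : Set α) : Prop :=
  ∀ X' : Set α, ∀ e' : α, ∀ Y' : Set α,
    Vertical3Sep M X' e' Y' → ¬ (Y ∪ {e} ⊂ Y' ∪ {e'})

/-! ### Circuits, fans -/

/-- A circuit is a minimal dependent set. -/
def Circuit (M : Matroid α) (C : Set α) : Prop := M.Dep C ∧ ∀ D, D ⊂ C → M.Indep D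

/-- A triangle is a 3-element circuit. -/
def Triangle (M : Matroid α) (T : Set α) : Prop := Circuit M T ∧ T.encard = 3

/-- A triad is a 3-element cocircuit. -/
def Triad (M : Matroid α) (T : Set α) : Prop := Circuit M✶ T ∧ T.encard = 3

/-- `f 0, f 1, …, f (k-1)` is a fan ordering in `M`. -/
def FanOrdering (M : Matroid α) (k : ℕ) (f : ℕ → α) : Prop :=
  3 ≤ k ∧ Set.InjOn f (Set.Iio k) ∧ (∀ i < k, f i ∈ M.E) ∧
  (∀ i, i + 2 < k →
    (Triangle M {f i, f (i+1), f (i+2)} ∨ Triad M {f i, f (i+1), f (i+2)})) ∧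
  (∀ i, i + 3 < k →
    (Triangle M {f i, f (i+1), f (i+2)} → Triad M {f (i+1), f (i+2), f (i+3)}) ∧
    (Triad M {f i, f (i+1), f (i+2)} → Triangle M {f (i+1), f (i+2), f (i+3)}))

/-- `F` is a fan of `M`. -/
def IsFan (M : Matroid α) (F : Set α) : Prop :=
  ∃ k f, FanOrdering M k f ∧ F = f '' (Set.Iio k)

/-- `M` has no 4-element fans. -/
def NoFourElementFan (M : Matroid α) : Prop := ¬ ∃ F, IsFan M F ∧ F.encard = 4

/-- A convenient ordering function for a 4-element fan. -/
def quad (a b c d : α) : ℕ → α :=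
  fun i => if i = 0 then a else if i = 1 then b else if i = 2 then c else d

/-! ### Simplification and cosimplification -/

/-- `e` is a nonloop of `M`. -/
def Nonloop (M : Matroid α) (e : α) : Prop := M.Indep {e}

/-- `S` is a simplification of `M`: the restriction of `M` to a transversal of the
parallel classes of `M`. -/
def IsSimplificationOf (S M : Matroid α) : Prop :=
  ∃ X : Set α, (∀ x ∈ X, Nonloop M x) ∧
    (∀ e, Nonloop M e → ∃! x, x ∈ X ∧ M.closure {x} = M.closure {e}) ∧
    S = M ↾ X

/-- `S` is a cosimplification of `M`. -/
def IsCosimplificationOf (S M : Matroid α) : Prop := IsSimplificationOf S✶ M✶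

/-- `si M` is 3-connected. -/
def SiConn3 (M : Matroid α) : Prop := ∀ S, IsSimplificationOf S M → ThreeConnected S

/-- `co M` is 3-connected. -/
def CoConn3 (M : Matroid α) : Prop := ∀ S, IsCosimplificationOf S M → ThreeConnected S

/-- `si M` has an `N`-minor. -/
def SiHasMinor (M N : Matroid α) : Prop := ∀ S, IsSimplificationOf S M → HasMinorIso S N

/-- `co M` has an `N`-minor. -/
def CoHasMinor (M N : Matroid α) : Prop := ∀ S, IsCosimplificationOf S M → HasMinorIso S N

/-! ### Elastic, N-elastic, N-revealing elements -/

/-- `e` is an elastic element of `M`. -/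
def Elastic (M : Matroid α) (e : α) : Prop :=
  e ∈ M.E ∧ SiConn3 (con M {e}) ∧ CoConn3 (del M {e})

/-- `e` is an `N`-elastic element of `M`. -/
def NElastic (M N : Matroid α) (e : α) : Prop :=
  Elastic M e ∧ SiHasMinor (con M {e}) N ∧ CoHasMinor (del M {e}) N

/-- `e` is an `N`-revealing element of `M`. -/
def NRevealing (M N : Matroid α) (e : α) : Prop :=
  e ∈ M.E ∧
    ((SiHasMinor (con M {e}) N ∧ ¬ SiConn3 (con M {e})) ∨
     (CoHasMinor (del M {e}) N ∧ ¬ CoConn3 (del M {e})))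

/-! ### Theta matroids and Theta-separators -/

/-- `M` is (isomorphic to) `Θ_n` or `Θ_n⁻`, with segment elements `W` and cosegment
elements `Z` (so `n = |Z|`). This is expressed by listing the circuits. -/
def ThetaParts (M : Matroid α) (W Z : Set α) : Prop :=
  M.E = W ∪ Z ∧ Disjoint W Z ∧ W.Finite ∧ Z.Finite ∧
  (W.ncard = Z.ncard ∨ W.ncard + 1 = Z.ncard) ∧
  ∃ f : α → α, Set.InjOn f W ∧ f '' W ⊆ Z ∧
    ∀ C, Circuit M C ↔
      ((C ⊆ W ∧ C.encard = 3) ∨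
       (∃ w ∈ W, C = insert w (Z \ {f w})) ∨
       (∃ w ∈ W, ∃ w' ∈ W, ∃ z ∈ Z, w ≠ w' ∧ z ≠ f w ∧ z ≠ f w' ∧
         C = insert w (insert w' (Z \ {z}))))

/-- `W ∪ Z` is a Θ-separator of `M`, where `W` is a rank-2 subset and `Z` a corank-2
subset of `E(M)`. -/
def ThetaSeparatorParts (M : Matroid α) (W Z : Set α) : Prop :=
  W ⊆ M.E ∧ Z ⊆ M.E ∧ 4 ≤ eRank M ∧ 4 ≤ eRank M✶ ∧
  eRk M W = 2 ∧ eRk M✶ Z = 2 ∧ 3 ≤ max W.ncard Z.ncard ∧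
  (ThetaParts (M ↾ (W ∪ Z)) W Z ∨ ThetaParts (M✶ ↾ (W ∪ Z)) Z W)

/-- `S` is a Θ-separator of `M`. -/
def ThetaSeparator (M : Matroid α) (S : Set α) : Prop :=
  ∃ W Z : Set α, S = W ∪ Z ∧ ThetaSeparatorParts M W Z

/-- `S` is a Θ-separator of `M` revealing the minor `N`. -/
def ThetaSeparatorRevealing (M N : Matroid α) (S : Set α) : Prop :=
  ∃ W Z : Set α, S = W ∪ Z ∧ W ⊆ M.E ∧ Z ⊆ M.E ∧ 4 ≤ eRank M ∧ 4 ≤ eRank M✶ ∧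
    eRk M W = 2 ∧ eRk M✶ Z = 2 ∧ 3 ≤ max W.ncard Z.ncard ∧
    ((ThetaParts (M ↾ (W ∪ Z)) W Z ∧ ∃ z ∈ Z, NRevealing M N z) ∨
     (ThetaParts (M✶ ↾ (W ∪ Z)) Z W ∧ ∃ w ∈ W, NRevealing M✶ N✶ w))

/-! ### Paths of 3-separations, path-width, sequential separations -/

/-- `M` has path-width three. -/
def PathWidthThree (M : Matroid α) : Prop :=
  ∃ (k : ℕ) (f : ℕ → α), Set.InjOn f (Set.Iio k) ∧ f '' (Set.Iio k) = M.E ∧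
    ∀ i ≤ k, KSeparating M 3 (f '' Set.Iio i)

/-- `(X, Y)` is a sequential 3-separation of `M`. -/
def SequentialThreeSeparation (M : Matroid α) (X Y : Set α) : Prop :=
  Disjoint X Y ∧ X ∪ Y = M.E ∧ ExactlyKSeparating M 3 X ∧
  ∃ U, (U = X ∨ U = Y) ∧ ∃ (k : ℕ) (f : ℕ → α), Set.InjOn f (Set.Iio k) ∧
    f '' (Set.Iio k) = U ∧ ∀ i ≤ k, KSeparating M 3 (f '' Set.Iio i)

/-! ### Flowers and M(K₄) -/

/-- `(P₁, P₂, P₃, P₄)` is a swirl-like flower of `M` with four petals. -/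
def SwirlLikeFlower4 (M : Matroid α) (P₁ P₂ P₃ P₄ : Set α) : Prop :=
  Disjoint P₁ P₂ ∧ Disjoint P₁ P₃ ∧ Disjoint P₁ P₄ ∧
  Disjoint P₂ P₃ ∧ Disjoint P₂ P₄ ∧ Disjoint P₃ P₄ ∧
  P₁ ∪ P₂ ∪ P₃ ∪ P₄ = M.E ∧
  2 ≤ P₁.encard ∧ 2 ≤ P₂.encard ∧ 2 ≤ P₃.encard ∧ 2 ≤ P₄.encard ∧
  KSeparating M 3 P₁ ∧ KSeparating M 3 P₂ ∧ KSeparating M 3 P₃ ∧ KSeparating M 3 P₄ ∧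
  KSeparating M 3 (P₁ ∪ P₂) ∧ KSeparating M 3 (P₂ ∪ P₃) ∧
  KSeparating M 3 (P₃ ∪ P₄) ∧ KSeparating M 3 (P₄ ∪ P₁) ∧
  eRk M P₁ + eRk M P₂ = eRk M (P₁ ∪ P₂) + 1 ∧
  eRk M P₂ + eRk M P₃ = eRk M (P₂ ∪ P₃) + 1 ∧
  eRk M P₃ + eRk M P₄ = eRk M (P₃ ∪ P₄) + 1 ∧
  eRk M P₄ + eRk M P₁ = eRk M (P₄ ∪ P₁) + 1 ∧
  eRk M P₁ + eRk M P₃ = eRk M (P₁ ∪ P₃) ∧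
  eRk M P₂ + eRk M P₄ = eRk M (P₂ ∪ P₄)

/-- `Q` is isomorphic to the cycle matroid `M(K₄)`. -/
def IsMK4 (Q : Matroid α) : Prop :=
  ∃ p q r s t u : α, ([p, q, r, s, t, u] : List α).Nodup ∧
    Q.E = {p, q, r, s, t, u} ∧
    ∀ C, Circuit Q C ↔
      C ∈ ({{p, q, s}, {p, r, t}, {q, r, u}, {s, t, u},
            {p, s, u, r}, {p, t, u, q}, {q, s, t, r}} : Set (Set α))

/-- `N` is isomorphic to the uniform matroid `U_{r,n}`. -/
def IsUnif (N : Matroid α) (r n : ℕ) : Prop :=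
  N.E.encard = (n : ℕ∞) ∧ ∀ I, N.Indep I ↔ I ⊆ N.E ∧ I.encard ≤ (r : ℕ∞)

/-! ### Fixed-basis notions -/

/-- `e` is removable with respect to the basis `B`. -/
def RemovableWrt (M : Matroid α) (B : Set α) (e : α) : Prop :=
  (e ∈ B ∧ SiConn3 (con M {e})) ∨ (e ∈ M.E \ B ∧ CoConn3 (del M {e}))

/-- `e` is `(N, B)`-robust. -/
def NBRobust (M N : Matroid α) (B : Set α) (e : α) : Prop :=
  (e ∈ B ∧ HasMinorIso (con M {e}) N) ∨ (e ∈ M.E \ B ∧ HasMinorIso (del M {e}) N)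

/-- `e` is `(N, B)`-strong. -/
def NBStrong (M N : Matroid α) (B : Set α) (e : α) : Prop :=
  (e ∈ B ∧ SiConn3 (con M {e}) ∧ SiHasMinor (con M {e}) N) ∨
  (e ∈ M.E \ B ∧ CoConn3 (del M {e}) ∧ CoHasMinor (del M {e}) N)

variable {M : Matroid α} {A X Y : Set α} {e : α} {k : ℕ}

lemma eRk_eq_matroid_eRk (M : Matroid α) (X : Set α) : eRk M X = M.eRk X := by
  obtain ⟨I, hI⟩ := M.exists_isBasis' X
  refine le_antisymm (iSup₂_le fun J hJ => hJ.1.encard_le_eRk_of_subset hJ.2) ?_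
  rw [← hI.encard_eq_eRk]
  exact le_iSup₂ (f := fun J (_ : J ∈ {I : Set α | M.Indep I ∧ I ⊆ X}) => J.encard) I
    ⟨hI.indep, hI.subset⟩

lemma eRank_eq_matroid_eRank (M : Matroid α) : eRank M = M.eRank := by
  rw [eRank, eRk_eq_matroid_eRk, eRk_ground]

lemma kSeparating_iff :
    KSeparating M k X ↔ M.eRk X + M.eRk (M.E \ X) + 1 ≤ M.eRank + k := by
  rw [KSeparating, eRk_eq_matroid_eRk, eRk_eq_matroid_eRk, eRank_eq_matroid_eRank]

lemma eRk_insert_eq_of_mem_closure (he : e ∈ M.closure X) : M.eRk (insert e X) = M.eRk X := by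
  rw [← eRk_insert_closure_eq, insert_eq_of_mem he, eRk_closure_eq]

lemma eRk_ne_top [M.RankFinite] (X : Set α) : M.eRk X ≠ ⊤ :=
  eRk_ne_top_iff.2 (M.isRkFinite_set X)

/- Adding `2 r(M)` to both inequalities and using `r✶(Z) + r(M) = r(E - Z) + |Z|` turns each
into the other plus the common summand `|E| = |X| + |E - X|`. -/
lemma kSeparating_dual_iff [M.Finite] (hX : X ⊆ M.E) :
    KSeparating M✶ k X ↔ KSeparating M k X := by
  have h₁ := M.eRk_dual_add_eRank X
  have h₂ := M.eRk_dual_add_eRank (M.E \ X)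
  rw [sdiff_sdiff_cancel_left hX] at h₂
  have h₃ := M.eRank_add_eRank_dual
  have h₄ := encard_sdiff_add_encard_of_subset hX
  rw [kSeparating_iff, kSeparating_iff, dual_ground]
  lift M✶.eRk X to ℕ using eRk_ne_top _ with a
  lift M✶.eRk (M.E \ X) to ℕ using eRk_ne_top _ with b
  lift M.eRk X to ℕ using eRk_ne_top _ with c
  lift M.eRk (M.E \ X) to ℕ using eRk_ne_top _ with d
  lift M.eRank to ℕ using M.eRank_ne_top_iff.2 inferInstance with r
  lift M✶.eRank to ℕ using M✶.eRank_ne_top_iff.2 inferInstance with s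
  lift X.encard to ℕ using (M.ground_finite.subset hX).encard_lt_top.ne with p
  lift (M.E \ X).encard to ℕ using (M.ground_finite.sdiff).encard_lt_top.ne with q
  lift M.E.encard to ℕ using M.ground_finite.encard_lt_top.ne with t
  norm_cast at *
  omega

lemma NConnected.dual [M.Finite] {n : ℕ} (hM : NConnected M n) : NConnected M✶ n := by
  rintro k A B hk ⟨hAB, hE, hA, hkA, hkB⟩
  have hAE : A ⊆ M.E := hE ▸ subset_union_left
  exact hM k A B hk ⟨hAB, hE, (kSeparating_dual_iff hAE).1 hA, hkA, hkB⟩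

lemma ThreeConnected.eRank_add_le_eRk_add_eRk_sdiff [M.RankFinite] (hM : ThreeConnected M)
    (hA : A ⊆ M.E) (hk : k < 3) (hkA : k ≤ A.encard) (hkA' : k ≤ (M.E \ A).encard) :
    M.eRank + k ≤ M.eRk A + M.eRk (M.E \ A) := by
  have hA_sep : ¬ KSeparating M k A := fun h =>
    hM k A _ hk ⟨disjoint_sdiff_right, union_sdiff_cancel hA, h, hkA, hkA'⟩
  rw [kSeparating_iff, not_le] at hA_sep
  exact (ENat.lt_add_one_iff (by simp)).1 hA_sep

lemma ThreeConnected.eRk_sdiff_closure_eq [M.RankFinite] (hM : ThreeConnected M)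
    (hXE : X ⊆ M.E) (hE : M.E ⊆ X ∪ M.closure Y) (hX : 3 ≤ M.eRk X) (hY : 2 ≤ M.eRk Y)
    (hXY : M.eRk X + M.eRk Y ≤ M.eRank + 2) : M.eRk (X \ M.closure Y) = M.eRk X := by
  set X' := X \ M.closure Y
  have hcompl : M.E \ X' = M.closure Y := by
    ext x; constructor
    · rintro ⟨hxE, hxX'⟩
      by_contra hx
      exact hxX' ⟨(hE hxE).resolve_right hx, hx⟩
    · exact fun hx => ⟨M.closure_subset_ground Y hx, fun h => h.2 hx⟩
  have hY_card : 2 ≤ (M.E \ X').encard := by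
    rw [hcompl]; exact hY.trans ((M.eRk_closure_eq Y).symm.le.trans (M.eRk_le_encard _))
  have hbound {k : ℕ} (hk : k < 3) (hkX' : k ≤ X'.encard) :
      M.eRank + k ≤ M.eRk X' + M.eRk Y := by
    have := hM.eRank_add_le_eRk_add_eRk_sdiff (sdiff_subset.trans hXE) hk hkX'
      (le_trans (by norm_cast; omega) hY_card)
    rwa [hcompl, eRk_closure_eq] at this
  refine le_antisymm (M.eRk_mono sdiff_subset) ?_
  have hX'_le := M.eRk_le_encard X'
  lift M.eRk X to ℕ using eRk_ne_top _ with a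
  lift M.eRk Y to ℕ using eRk_ne_top _ with b
  lift M.eRk X' to ℕ using eRk_ne_top _ with c
  lift M.eRank to ℕ using M.eRank_ne_top_iff.2 inferInstance with r
  rcases le_or_gt 2 X'.encard with h2 | h2
  · have hsep := hbound (by norm_num) h2
    norm_cast at *
    omega
  · -- `|X'| ≤ 1`, so the bound forces `Y` to be spanning, against `r(X) ≥ 3`
    lift X'.encard to ℕ using (h2.trans (by decide)).ne with n
    have hsep := hbound (by norm_cast at h2; omega) le_rfl
    norm_cast at *
    omega

lemma sdiff_eq_of_union_singleton_union_eq {E : Set α} (heX : e ∉ X) (heY : e ∉ Y)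
    (hXY : Disjoint X Y) (hE : X ∪ {e} ∪ Y = E) : E \ (X ∪ {e}) = Y ∧ E \ X = Y ∪ {e} := by
  subst hE
  have := hXY.notMem_of_mem_left
  constructor <;> ext x <;> simp only [mem_sdiff, mem_union, mem_singleton_iff] <;> grind

lemma vertical3Sep_iff : Vertical3Sep M X e Y ↔
    e ∉ X ∧ e ∉ Y ∧ Disjoint X Y ∧ X ∪ {e} ∪ Y = M.E ∧ 3 ≤ M.eRk X ∧ 3 ≤ M.eRk Y ∧
      M.eRk X + M.eRk Y ≤ M.eRank + 2 ∧ e ∈ M.closure X ∧ e ∈ M.closure Y := by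
  simp only [Vertical3Sep, VerticalKSeparation, KSeparation, kSeparating_iff,
    eRk_eq_matroid_eRk]
  constructor
  · rintro ⟨heX, heY, hXY, hE, ⟨⟨-, -, hsep, -⟩, -, hY⟩, ⟨-, hX, -⟩, heX', heY'⟩
    refine ⟨heX, heY, hXY, hE, hX, hY, ?_, heX', heY'⟩
    rwa [(sdiff_eq_of_union_singleton_union_eq heX heY hXY hE).1, union_singleton,
      eRk_insert_eq_of_mem_closure heX', show ((3 : ℕ) : ℕ∞) = 2 + 1 from rfl, ← add_assoc,
      ENat.add_le_add_iff_right ENat.one_ne_top] at hsep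
  · rintro ⟨heX, heY, hXY, hE, hX, hY, hsep, heX', heY'⟩
    obtain ⟨hEX, hEXe⟩ := sdiff_eq_of_union_singleton_union_eq heX heY hXY hE
    have hsep' : M.eRk X + M.eRk Y + 1 ≤ M.eRank + ((3 : ℕ) : ℕ∞) := by
      rw [show ((3 : ℕ) : ℕ∞) = 2 + 1 from rfl, ← add_assoc]; exact add_le_add hsep le_rfl
    have hXcard := hX.trans (M.eRk_le_encard X)
    have hYcard := hY.trans (M.eRk_le_encard Y)
    have hXe : M.eRk (X ∪ {e}) = M.eRk X := by
      rw [union_singleton, eRk_insert_eq_of_mem_closure heX']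
    have hYe : M.eRk (Y ∪ {e}) = M.eRk Y := by
      rw [union_singleton, eRk_insert_eq_of_mem_closure heY']
    refine ⟨heX, heY, hXY, hE, ⟨⟨?_, hE, ?_, ?_, hYcard⟩, hXe ▸ hX, hY⟩,
      ⟨⟨?_, ?_, ?_, hXcard, ?_⟩, hX, hYe ▸ hY⟩, heX', heY'⟩
    · exact disjoint_union_left.2 ⟨hXY, disjoint_singleton_left.2 heY⟩
    · rwa [hXe, hEX]
    · exact hXcard.trans (encard_mono subset_union_left)
    · exact disjoint_union_right.2 ⟨hXY, disjoint_singleton_right.2 heX⟩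
    · rw [← hE, union_assoc, union_comm {e}]
    · rwa [hEXe, hYe]
    · exact hYcard.trans (encard_mono subset_union_left)

lemma ThreeConnected.vertical3Sep_sdiff_closure [M.RankFinite] (hM : ThreeConnected M)
    (h : Vertical3Sep M X e Y) : Vertical3Sep M (X \ M.closure Y) e (M.closure Y \ {e}) := by
  rw [vertical3Sep_iff] at h ⊢
  obtain ⟨heX, heY, hXY, hE, hX, hY, hsep, heX', heY'⟩ := h
  have hYE : Y ⊆ M.E := hE ▸ subset_union_right
  have hXE : X ⊆ M.E := hE ▸ subset_union_left.trans subset_union_left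
  have hE_cover : X ∪ M.closure Y = M.E :=
    (union_subset hXE (M.closure_subset_ground Y)).antisymm <| hE ▸ union_subset
      (union_subset_union_right X (singleton_subset_iff.2 heY'))
      ((M.subset_closure Y hYE).trans subset_union_right)
  have hYY' : Y ⊆ M.closure Y \ {e} := subset_sdiff_singleton (M.subset_closure Y) heY
  have hY' : M.eRk (M.closure Y \ {e}) = M.eRk Y :=
    le_antisymm ((M.eRk_mono sdiff_subset).trans (M.eRk_closure_eq Y).le) (M.eRk_mono hYY')
  have hX' : M.eRk (X \ M.closure Y) = M.eRk X :=
    hM.eRk_sdiff_closure_eq hXE hE_cover.ge hX (le_trans (by norm_num) hY) hsep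
  have hclX' : M.closure (X \ M.closure Y) = M.closure X :=
    (M.isRkFinite_set _).closure_eq_closure_of_subset_of_eRk_ge_eRk sdiff_subset hX'.ge
  refine ⟨fun h => h.2 heY', fun h => h.2 rfl, disjoint_sdiff_left.mono_right sdiff_subset,
    ?_, hX' ▸ hX, hY' ▸ hY, hX' ▸ hY' ▸ hsep, hclX' ▸ heX', M.closure_subset_closure hYY' heY'⟩
  rw [union_assoc, union_comm {e}, sdiff_union_of_subset (singleton_subset_iff.2 heY'),
    sdiff_union_self, hE_cover]

/-- Lemma 2.6. -/
theorem statement_18 {α : Type*} (M : Matroid α) [M.Finite]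
    (hM : ThreeConnected M) (X Y : Set α) (e : α) :
    (Vertical3Sep M X e Y →
      Vertical3Sep M (X \ M.closure Y) e (M.closure Y \ {e})) ∧
    (Cyclic3Sep M X e Y →
      Cyclic3Sep M (X \ M✶.closure Y) e (M✶.closure Y \ {e})) :=
  ⟨hM.vertical3Sep_sdiff_closure, ThreeConnected.vertical3Sep_sdiff_closure hM.dual⟩

end ElasticPaper
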